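/- If $n_1, x, y$ are integers satisfying $\frac{n_1}{n_1^2} = \frac{x}{x^2+y^2} + \frac{n_1-x}{(n_1-x)^2+y^2}$ (with all denominators nonzero), then $n_1 \cdot x \cdot (n_1 - x) = 0$. -/

import Mathlib

/-!
With `u = x` and `v = n₁ - x`, clearing denominators turns the resonance condition into
`(y² - uv)² = uv (u + v)²`. Then `u + v ∣ y² - uv`, say `y² - uv = (u + v) w`, so `uv = w²` and
`y² = w² + (u + v) w`. Writing `u = g p²`, `v = g q²`, `w = g p q` gives
`(y / g)² = pq (p² + pq + q²)` with coprime factors, so `p`, `q` and `p² + pq + q²` are squares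
and `X⁴ + X²Y² + Y⁴ = Z²` has a solution with `XY ≠ 0`.

That equation has none, by Fermat descent. For coprime `X` odd and `Y = 2c`, the coprime factors
`X² ± XY + Y²` are squares `e²`, `f²`; `U = (e + f)/2`, `V = (e - f)/2` satisfy
`U² + V² = X² + Y²` and `UV = Xc`. Factoring `U = as`, `V = bt`, `X = ab`, `c = st` yields
`a² - t² = k s²` and `a² - 4t² = k b²` with `k ∣ 3`: for `k = 1` and `k = -3` the numbers `s`
resp. `t` satisfy the equation again with smaller `Z`, and `k = -1`, `k = 3` are impossible mod 4.
-/

namespace Int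

lemma exists_sq_of_isCoprime_of_pos {a b c : ℤ} (ha : 0 < a) (hab : IsCoprime a b)
    (h : a * b = c ^ 2) : ∃ d, 0 < d ∧ a = d ^ 2 := by
  obtain ⟨d, hd | hd⟩ := sq_of_isCoprime hab h
  · refine ⟨|d|, abs_pos.2 ?_, by rw [sq_abs, hd]⟩
    rintro rfl
    simp [hd] at ha
  · nlinarith [sq_nonneg d]

lemma exists_factors_of_mul_eq_mul {U V x c : ℤ} (hx : x ≠ 0) (h : U * V = x * c) :
    ∃ a b s t, x = a * b ∧ U = a * s ∧ V = b * t ∧ c = s * t := by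
  obtain ⟨a, b, ⟨s, rfl⟩, ⟨t, rfl⟩, rfl⟩ := exists_dvd_and_dvd_of_dvd_mul (Dvd.intro c h.symm)
  exact ⟨a, b, s, t, rfl, rfl, rfl, mul_left_cancel₀ hx (by linear_combination -h)⟩

lemma not_even_and_even_of_isCoprime {x y : ℤ} (h : IsCoprime x y) : ¬(Even x ∧ Even y) := by
  rintro ⟨hx, hy⟩
  have := h.isUnit_of_dvd' (even_iff_two_dvd.1 hx) (even_iff_two_dvd.1 hy)
  norm_num [Int.isUnit_iff] at this

lemma odd_sq_add_mul_add_sq {x y : ℤ} (h : IsCoprime x y) : Odd (x ^ 2 + x * y + y ^ 2) := by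
  have := not_even_and_even_of_isCoprime h
  simp only [← Int.not_even_iff_odd, Int.even_add, Int.even_mul, Int.even_pow] at *
  tauto

lemma isCoprime_sq_add_mul_add_sq_mul {x y : ℤ} (h : IsCoprime x y) :
    IsCoprime (x ^ 2 + x * y + y ^ 2) (x * y) := by
  have hx := (h.symm.pow_left (m := 2)).add_mul_left_left (x + y)
  have hy := (h.pow_left (m := 2)).add_mul_left_left (x + y)
  rw [show y ^ 2 + x * (x + y) = x ^ 2 + x * y + y ^ 2 by ring] at hx
  rw [show x ^ 2 + y * (x + y) = x ^ 2 + x * y + y ^ 2 by ring] at hy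
  exact hx.mul_right hy

lemma sq_add_mul_add_sq_pos {x y : ℤ} (h : IsCoprime x y) : 0 < x ^ 2 + x * y + y ^ 2 := by
  refine lt_of_le_of_ne (by nlinarith [sq_nonneg (x + y)]) fun h0 => ?_
  simpa [← h0] using odd_sq_add_mul_add_sq h

lemma exists_eq_mul_sq_of_mul_eq_sq {u v w : ℤ} (hu : 0 < u) (hw : 0 < w) (h : u * v = w ^ 2) :
    ∃ g p q : ℤ, 0 < p ∧ 0 < q ∧ IsCoprime p q ∧
      u = g * p ^ 2 ∧ v = g * q ^ 2 ∧ w = g * (p * q) := by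
  obtain ⟨g, u, v, hg, huv, rfl, rfl⟩ := exists_gcd_one' (gcd_pos_of_ne_zero_left v hu.ne')
  have hg0 : (0 : ℤ) < g := by exact_mod_cast hg
  obtain ⟨w, rfl⟩ : (g : ℤ) ∣ w :=
    (pow_dvd_pow_iff two_ne_zero).1 ⟨u * v, by linear_combination -h⟩
  have huvw : u * v = w ^ 2 :=
    mul_left_cancel₀ (a := (g : ℤ) ^ 2) (by positivity) (by linear_combination h)
  have hcop := isCoprime_iff_gcd_eq_one.2 huv
  have hw0 : 0 < w := pos_of_mul_pos_right hw hg0.le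
  obtain ⟨p, hp, rfl⟩ := exists_sq_of_isCoprime_of_pos (pos_of_mul_pos_left hu hg0.le) hcop huvw
  have hv0 : 0 < v := pos_of_mul_pos_right (huvw ▸ pow_pos hw0 2) (sq_nonneg p)
  obtain ⟨q, hq, rfl⟩ := exists_sq_of_isCoprime_of_pos hv0 hcop.symm ((mul_comm _ _).trans huvw)
  obtain rfl : w = p * q :=
    (pow_left_inj₀ hw0.le (by positivity) two_ne_zero).1 (by linear_combination -huvw)
  exact ⟨g, p, q, hp, hq, (IsCoprime.pow_iff two_pos two_pos).1 hcop, by ring, by ring, by ring⟩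

end Int

open Int

lemma exists_quartic_eq_of_mul_eq_sq {d e r : ℤ} (hde : IsCoprime d e) (hr : r ≠ 0)
    (h : d * e = r ^ 2) :
    ∃ n m : ℤ, n ≠ 0 ∧ m ≠ 0 ∧ n ^ 4 + n ^ 2 * m ^ 2 + m ^ 4 = d ^ 2 + d * e + e ^ 2 := by
  have hde0 : 0 < d * e := h ▸ by positivity
  wlog hd : 0 < d generalizing d e
  · obtain ⟨n, m, hn, hm, hnm⟩ :=
      this hde.neg_neg (by linear_combination h) (by linarith)
        (neg_pos.2 (lt_of_le_of_ne (not_lt.1 hd) (by rintro rfl; simp at hde0)))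
    exact ⟨n, m, hn, hm, by linear_combination hnm⟩
  have he : 0 < e := pos_of_mul_pos_right hde0 hd.le
  obtain ⟨n, hn, rfl⟩ := exists_sq_of_isCoprime_of_pos hd hde h
  obtain ⟨m, hm, rfl⟩ := exists_sq_of_isCoprime_of_pos he hde.symm ((mul_comm _ _).trans h)
  exact ⟨n, m, hn.ne', hm.ne', by ring⟩

lemma exists_quartic_eq_of_sq_sub_sq {a b r : ℤ} (hab : IsCoprime a b) (ha : Odd a) (hb : Odd b)
    (hr : r ≠ 0) (h : a ^ 2 - b ^ 2 = 4 * r ^ 2) :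
    ∃ n m : ℤ, n ≠ 0 ∧ m ≠ 0 ∧ n ^ 4 + n ^ 2 * m ^ 2 + m ^ 4 = a ^ 2 - r ^ 2 := by
  obtain ⟨d, hd⟩ := ha.sub_odd hb
  obtain ⟨e, he⟩ := ha.add_odd hb
  obtain rfl : a = d + e := by linarith
  obtain rfl : b = e - d := by linarith
  have hde : d * e = r ^ 2 := mul_left_cancel₀ four_ne_zero (by linear_combination h)
  have hcop : IsCoprime d e := by
    obtain ⟨u, v, huv⟩ := hab
    exact ⟨u - v, u + v, by linear_combination huv⟩
  obtain ⟨n, m, hn, hm, hnm⟩ := exists_quartic_eq_of_mul_eq_sq hcop hr hde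
  exact ⟨n, m, hn, hm, by linear_combination hnm - hde⟩

lemma exists_sq_add_sq_of_quartic_eq_sq {x y z : ℤ} (hxy : IsCoprime x y)
    (h : x ^ 4 + x ^ 2 * y ^ 2 + y ^ 4 = z ^ 2) :
    ∃ U V : ℤ, IsCoprime U V ∧ U ^ 2 + V ^ 2 = x ^ 2 + y ^ 2 ∧ 2 * (U * V) = x * y := by
  have hA := sq_add_mul_add_sq_pos hxy
  have hB := sq_add_mul_add_sq_pos hxy.neg_right
  have hAB : IsCoprime (x ^ 2 + x * y + y ^ 2) (x ^ 2 + x * -y + (-y) ^ 2) := by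
    obtain ⟨k, hk⟩ := odd_sq_add_mul_add_sq hxy
    have h2 : IsCoprime (x ^ 2 + x * y + y ^ 2) 2 := ⟨1, -k, by linear_combination hk⟩
    have := ((h2.mul_right (isCoprime_sq_add_mul_add_sq_mul hxy)).neg_right).add_mul_left_right 1
    rwa [show -(2 * (x * y)) + (x ^ 2 + x * y + y ^ 2) * 1 = x ^ 2 + x * -y + (-y) ^ 2 by ring]
      at this
  obtain ⟨e, -, he⟩ := exists_sq_of_isCoprime_of_pos (c := z) hA hAB (by linear_combination h)
  obtain ⟨f, -, hf⟩ := exists_sq_of_isCoprime_of_pos (c := z) hB hAB.symm (by linear_combination h)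
  have he_odd : Odd e :=
    (Int.odd_pow.1 (he ▸ odd_sq_add_mul_add_sq hxy)).resolve_right two_ne_zero
  have hf_odd : Odd f :=
    (Int.odd_pow.1 (hf ▸ odd_sq_add_mul_add_sq hxy.neg_right)).resolve_right two_ne_zero
  obtain ⟨U, hU⟩ := he_odd.add_odd hf_odd
  obtain ⟨V, hV⟩ := he_odd.sub_odd hf_odd
  obtain rfl : e = U + V := by linarith
  obtain rfl : f = U - V := by linarith
  refine ⟨U, V, ?_, mul_left_cancel₀ two_ne_zero (by linear_combination -he - hf),
    mul_left_cancel₀ two_ne_zero (by linear_combination hf - he)⟩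
  obtain ⟨u, v, huv⟩ := (IsCoprime.pow_iff two_pos two_pos).1 (he ▸ hf ▸ hAB)
  exact ⟨u + v, u - v, by linear_combination huv⟩

lemma exists_quartic_eq_sq_of_sq_add_sq_eq {a b s t : ℤ} (hab : IsCoprime a b)
    (hsb : IsCoprime s b) (hat : IsCoprime a t) (ha : Odd a) (hb : Odd b) (hs : s ≠ 0) (ht : t ≠ 0)
    (h : (a * s) ^ 2 + (b * t) ^ 2 = (a * b) ^ 2 + (2 * (s * t)) ^ 2) :
    ∃ n m : ℤ, n ≠ 0 ∧ m ≠ 0 ∧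
      (n ^ 4 + n ^ 2 * m ^ 2 + m ^ 4 = s ^ 2 ∨ n ^ 4 + n ^ 2 * m ^ 2 + m ^ 4 = t ^ 2) := by
  obtain ⟨k, hk⟩ : s ^ 2 ∣ a ^ 2 - t ^ 2 :=
    (hsb.pow (m := 2) (n := 2)).dvd_of_dvd_mul_left ⟨a ^ 2 - 4 * t ^ 2, by linear_combination -h⟩
  have hk' : a ^ 2 - 4 * t ^ 2 = k * b ^ 2 :=
    mul_left_cancel₀ (pow_ne_zero 2 hs) (by linear_combination h + b ^ 2 * hk)
  -- `k` divides both `3 a ^ 2` and `3 t ^ 2`, and `a`, `t` are coprime.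
  have hk3 : k ∣ 3 := by
    obtain ⟨u, v, huv⟩ := hat.pow (m := 2) (n := 2)
    exact ⟨u * (4 * s ^ 2 - b ^ 2) + v * (s ^ 2 - b ^ 2),
      by linear_combination 4 * u * hk - u * hk' + v * hk - v * hk' - 3 * huv⟩
  have hk_cases : k = 1 ∨ k = -1 ∨ k = 3 ∨ k = -3 := by
    have : k ≤ 3 := Int.le_of_dvd three_pos hk3
    have : -3 ≤ k := by linarith [Int.le_of_dvd three_pos hk3.neg_left]
    interval_cases k <;> simp_all
  have ha4 := Int.sq_mod_four_eq_one_of_odd ha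
  have hb4 := Int.sq_mod_four_eq_one_of_odd hb
  rcases hk_cases with rfl | rfl | rfl | rfl
  · obtain ⟨n, m, hn, hm, hnm⟩ :=
      exists_quartic_eq_of_sq_sub_sq hab ha hb ht (by linear_combination hk')
    exact ⟨n, m, hn, hm, .inl (by linear_combination hnm + hk)⟩
  · omega
  · omega
  · obtain ⟨n, m, hn, hm, hnm⟩ :=
      exists_quartic_eq_of_sq_sub_sq hab.symm hb ha hs (by linarith)
    exact ⟨n, m, hn, hm, .inr (by linarith)⟩

lemma sq_add_sq_lt_quartic {x y : ℤ} (hx : x ≠ 0) (hy : y ≠ 0) :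
    x ^ 2 + y ^ 2 < x ^ 4 + x ^ 2 * y ^ 2 + y ^ 4 := by
  have hx2 : 0 < x ^ 2 := by positivity
  have hy2 : 0 < y ^ 2 := by positivity
  nlinarith

lemma exists_smaller_of_odd_of_even {x y z : ℤ} (hxy : IsCoprime x y) (hx : Odd x) (hy : Even y)
    (hy0 : y ≠ 0) (h : x ^ 4 + x ^ 2 * y ^ 2 + y ^ 4 = z ^ 2) :
    ∃ p q r : ℤ, p ≠ 0 ∧ q ≠ 0 ∧ p ^ 4 + p ^ 2 * q ^ 2 + q ^ 4 = r ^ 2 ∧ r ^ 2 < z ^ 2 := by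
  have hlt := h ▸ sq_add_sq_lt_quartic (by rintro rfl; simp at hx) hy0
  obtain ⟨U, V, hUV, hsum, hprod⟩ := exists_sq_add_sq_of_quartic_eq_sq hxy h
  obtain ⟨c, rfl⟩ := hy.two_dvd
  have hUVxc : U * V = x * c := mul_left_cancel₀ two_ne_zero (by linear_combination hprod)
  obtain ⟨a, b, s, t, rfl, rfl, rfl, rfl⟩ :=
    exists_factors_of_mul_eq_mul (by rintro rfl; simp at hx) hUVxc
  obtain ⟨ha, hb⟩ := Int.odd_mul.1 hx
  have ha0 : a ≠ 0 := by rintro rfl; simp at ha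
  obtain ⟨hs0, ht0⟩ : s ≠ 0 ∧ t ≠ 0 := by simpa [or_imp, not_or] using hy0
  have ha1 : 0 < a ^ 2 := by positivity
  have hs1 : 0 < s ^ 2 := by positivity
  obtain ⟨n, m, hn, hm, hr | hr⟩ := exists_quartic_eq_sq_of_sq_add_sq_eq
    (hUV.of_mul_left_left.of_mul_right_left) (hUV.of_mul_left_right.of_mul_right_left)
    (hxy.of_mul_right_right.of_mul_left_left.of_mul_right_right) ha hb
    hs0 ht0 (by linear_combination hsum)
  · exact ⟨n, m, s, hn, hm, hr, by nlinarith⟩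
  · exact ⟨n, m, t, hn, hm, hr, by nlinarith⟩

lemma quartic_ne_sq_of_odd_of_odd {x y z : ℤ} (hx : Odd x) (hy : Odd y) :
    x ^ 4 + x ^ 2 * y ^ 2 + y ^ 4 ≠ z ^ 2 := by
  obtain ⟨m, rfl⟩ := hx
  obtain ⟨n, rfl⟩ := hy
  intro h
  have h4 := congrArg (Int.cast : ℤ → ZMod 4) h
  push_cast at h4
  generalize (m : ZMod 4) = m, (n : ZMod 4) = n, (z : ZMod 4) = z at h4
  revert m n z
  decide

lemma exists_smaller_of_isCoprime {x y z : ℤ} (hxy : IsCoprime x y) (hx : x ≠ 0) (hy : y ≠ 0)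
    (h : x ^ 4 + x ^ 2 * y ^ 2 + y ^ 4 = z ^ 2) :
    ∃ p q r : ℤ, p ≠ 0 ∧ q ≠ 0 ∧ p ^ 4 + p ^ 2 * q ^ 2 + q ^ 4 = r ^ 2 ∧ r ^ 2 < z ^ 2 := by
  rcases Int.even_or_odd x with hx2 | hx2 <;> rcases Int.even_or_odd y with hy2 | hy2
  · exact absurd ⟨hx2, hy2⟩ (not_even_and_even_of_isCoprime hxy)
  · exact exists_smaller_of_odd_of_even hxy.symm hy2 hx2 hx (by linear_combination h)
  · exact exists_smaller_of_odd_of_even hxy hx2 hy2 hy h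
  · exact absurd h (quartic_ne_sq_of_odd_of_odd hx2 hy2)

lemma exists_smaller_of_quartic_eq_sq {x y z : ℤ} (hx : x ≠ 0) (hy : y ≠ 0)
    (h : x ^ 4 + x ^ 2 * y ^ 2 + y ^ 4 = z ^ 2) :
    ∃ p q r : ℤ, p ≠ 0 ∧ q ≠ 0 ∧ p ^ 4 + p ^ 2 * q ^ 2 + q ^ 4 = r ^ 2 ∧ r ^ 2 < z ^ 2 := by
  obtain ⟨g, x, y, hg, hxy, rfl, rfl⟩ := Int.exists_gcd_one' (Int.gcd_pos_of_ne_zero_left y hx)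
  have hg4 : ((g : ℤ) ^ 2) ^ 2 * (x ^ 4 + x ^ 2 * y ^ 2 + y ^ 4) = z ^ 2 := by
    linear_combination h
  obtain ⟨z, rfl⟩ := (Int.pow_dvd_pow_iff two_ne_zero).1 (Dvd.intro _ hg4)
  have hg1 : 1 ≤ ((g : ℤ) ^ 2) ^ 2 := one_le_pow₀ (one_le_pow₀ (by exact_mod_cast hg))
  obtain ⟨p, q, r, hp, hq, hpq, hr⟩ := exists_smaller_of_isCoprime (z := z)
    (Int.isCoprime_iff_gcd_eq_one.2 hxy) (left_ne_zero_of_mul hx) (left_ne_zero_of_mul hy)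
    (mul_left_cancel₀ (a := ((g : ℤ) ^ 2) ^ 2) (by positivity) (by linear_combination hg4))
  exact ⟨p, q, r, hp, hq, hpq, by nlinarith [sq_nonneg z]⟩

theorem quartic_ne_sq {x y z : ℤ} (hx : x ≠ 0) (hy : y ≠ 0) :
    x ^ 4 + x ^ 2 * y ^ 2 + y ^ 4 ≠ z ^ 2 := by
  induction hz : z.natAbs using Nat.strong_induction_on generalizing x y z with
  | _ N ih =>
  intro h
  obtain ⟨p, q, r, hp, hq, hpq, hr⟩ := exists_smaller_of_quartic_eq_sq hx hy h
  exact ih r.natAbs (hz ▸ Int.natAbs_lt_iff_sq_lt.2 hr) hp hq rfl hpq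

lemma exists_quartic_eq_sq_of_sq_sub_mul_sq_eq {u v y : ℤ} (hu : 0 < u) (hv : 0 < v)
    (h : (y ^ 2 - u * v) ^ 2 = u * v * (u + v) ^ 2) :
    ∃ p q r : ℤ, p ≠ 0 ∧ q ≠ 0 ∧ p ^ 4 + p ^ 2 * q ^ 2 + q ^ 4 = r ^ 2 := by
  obtain ⟨w, hw⟩ : u + v ∣ y ^ 2 - u * v :=
    (Int.pow_dvd_pow_iff two_ne_zero).1 ⟨u * v, by linear_combination h⟩
  have huvw : u * v = w ^ 2 := mul_left_cancel₀ (a := (u + v) ^ 2) (by positivity)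
    (by linear_combination -h + (y ^ 2 - u * v + (u + v) * w) * hw)
  -- `y ^ 2 = w ^ 2 + (u + v) w` and `4 w ^ 2 = 4 u v ≤ (u + v) ^ 2` force `w > 0`.
  have hw0 : 0 < w := by
    by_contra! hw0
    nlinarith [sq_nonneg (u - v), sq_nonneg y, mul_pos hu hv]
  obtain ⟨g, p, q, hp, hq, hpq, rfl, rfl, rfl⟩ := exists_eq_mul_sq_of_mul_eq_sq hu hw0 huvw
  have hg : g ≠ 0 := by rintro rfl; simp at hu
  have hy : g ^ 2 * (p * q * (p ^ 2 + p * q + q ^ 2)) = y ^ 2 := by linear_combination -hw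
  obtain ⟨y, rfl⟩ := (Int.pow_dvd_pow_iff two_ne_zero).1 (Dvd.intro _ hy)
  have hy' : p * q * (p ^ 2 + p * q + q ^ 2) = y ^ 2 :=
    mul_left_cancel₀ (pow_ne_zero 2 hg) (by linear_combination hy)
  have hcop := isCoprime_sq_add_mul_add_sq_mul hpq
  obtain ⟨c, hc, hc'⟩ := exists_sq_of_isCoprime_of_pos (mul_pos hp hq) hcop.symm hy'
  obtain ⟨r, -, hr⟩ := exists_sq_of_isCoprime_of_pos (sq_add_mul_add_sq_pos hpq) hcop
    ((mul_comm _ _).trans hy')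
  obtain ⟨n, m, hn, hm, hnm⟩ := exists_quartic_eq_of_mul_eq_sq hpq hc.ne' hc'
  exact ⟨n, m, r, hn, hm, hnm.trans hr⟩

lemma sq_sub_mul_sq_ne {u v y : ℤ} (hu : u ≠ 0) (hv : v ≠ 0) (huv : u + v ≠ 0) :
    (y ^ 2 - u * v) ^ 2 ≠ u * v * (u + v) ^ 2 := by
  intro h
  have hpos : 0 < u * v := by
    refine lt_of_le_of_ne ?_ (mul_ne_zero hu hv).symm
    by_contra! hneg
    nlinarith [sq_nonneg (y ^ 2 - u * v), (by positivity : 0 < (u + v) ^ 2)]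
  obtain ⟨p, q, r, hp, hq, hpqr⟩ :
      ∃ p q r : ℤ, p ≠ 0 ∧ q ≠ 0 ∧ p ^ 4 + p ^ 2 * q ^ 2 + q ^ 4 = r ^ 2 := by
    rcases mul_pos_iff.1 hpos with ⟨hu, hv⟩ | ⟨hu, hv⟩
    · exact exists_quartic_eq_sq_of_sq_sub_mul_sq_eq hu hv h
    · exact exists_quartic_eq_sq_of_sq_sub_mul_sq_eq (y := y) (neg_pos.2 hu) (neg_pos.2 hv)
        (by linear_combination h)
  exact quartic_ne_sq hp hq hpqr

lemma sq_sub_mul_sq_eq_of_div_eq_add_div {K : Type*} [Field K] {n u y : K} (hn : n ≠ 0)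
    (hu : u ^ 2 + y ^ 2 ≠ 0) (hv : (n - u) ^ 2 + y ^ 2 ≠ 0)
    (h : n / n ^ 2 = u / (u ^ 2 + y ^ 2) + (n - u) / ((n - u) ^ 2 + y ^ 2)) :
    (y ^ 2 - u * (n - u)) ^ 2 = u * (n - u) * n ^ 2 := by
  field_simp at h
  linear_combination h

theorem no_axis_resonance_general (n₁ x y : ℤ)
    (h : (n₁ : ℚ) / (n₁^2) = (x : ℚ) / (x^2 + y^2) + ((n₁ - x : ℤ) : ℚ) / ((n₁ - x)^2 + y^2)) :
    n₁ * x * (n₁ - x) = 0 := by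
  by_contra hne
  have hn : n₁ ≠ 0 := left_ne_zero_of_mul (left_ne_zero_of_mul hne)
  have hx : x ≠ 0 := right_ne_zero_of_mul (left_ne_zero_of_mul hne)
  have hv : n₁ - x ≠ 0 := right_ne_zero_of_mul hne
  have hQ : ((y : ℚ) ^ 2 - x * (n₁ - x)) ^ 2 = x * (n₁ - x) * n₁ ^ 2 := by
    have hv' : (n₁ : ℚ) - x ≠ 0 := by exact_mod_cast hv
    push_cast at h
    exact sq_sub_mul_sq_eq_of_div_eq_add_div (by exact_mod_cast hn) (by positivity)
      (by positivity) h
  refine sq_sub_mul_sq_ne hx hv (by rwa [add_sub_cancel]) (y := y) ?_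
  rw [add_sub_cancel]
  exact_mod_cast hQ

theorem no_axis_resonance (n₁ x y : ℤ) (hn : n₁ ≠ 0)
    (hx : (x, y) ≠ (0, 0)) (hnx : (n₁ - x, y) ≠ (0, 0))
    (h : (n₁ : ℚ) / (n₁^2) = (x : ℚ) / (x^2 + y^2) + ((n₁ - x : ℤ) : ℚ) / ((n₁ - x)^2 + y^2)) :
    n₁ * x * (n₁ - x) = 0 :=
  no_axis_resonance_general n₁ x y h
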